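/- Let d ≥ 2 and let P be the projector onto the antisymmetric subspace of ℂ^d ⊗ ℂ^d, realized as the matrix P = (1/2)(1 − F) indexed by (Fin d × Fin d), where F is the swap matrix with entries F[(i,j),(k,l)] = δ_{il}·δ_{jk}. Then for every separable density matrix σ on ℂ^d ⊗ ℂ^d, the real part of Tr(P·σ) is at most √3/2 (i.e. Tr(P·σ) ≤ √(3/4)). -/

import Mathlib

open Matrix Kronecker ComplexOrder

/-- The swap matrix on `ℂ^d ⊗ ℂ^d`, with entries `F[(i,j),(k,l)] = δ_{il}·δ_{jk}`. -/
noncomputable def swapMat (d : ℕ) : Matrix (Fin d × Fin d) (Fin d × Fin d) ℂ :=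
  fun p q => (if p.1 = q.2 then 1 else 0) * (if p.2 = q.1 then 1 else 0)

/-- The projector onto the antisymmetric subspace of `ℂ^d ⊗ ℂ^d`: `P = (1/2)(1 - F)`. -/
noncomputable def antiProj (d : ℕ) : Matrix (Fin d × Fin d) (Fin d × Fin d) ℂ :=
  (1 / 2 : ℂ) • ((1 : Matrix (Fin d × Fin d) (Fin d × Fin d) ℂ) - swapMat d)

/-- A density matrix: positive semidefinite with trace 1. -/
def IsDensityMatrix {ι : Type} [Fintype ι] [DecidableEq ι] (ρ : Matrix ι ι ℂ) : Prop :=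
  ρ.PosSemidef ∧ ρ.trace = 1

/-- A separable state on a bipartite system `ι ⊗ ι`: a finite convex combination of
Kronecker products of density matrices. -/
def IsSeparableState {ι : Type} [Fintype ι] [DecidableEq ι]
    (σ : Matrix (ι × ι) (ι × ι) ℂ) : Prop :=
  ∃ (m : ℕ) (p : Fin m → ℝ) (ρ τ : Fin m → Matrix ι ι ℂ),
    (∀ j, 0 ≤ p j) ∧ (∑ j, p j = 1) ∧
    (∀ j, IsDensityMatrix (ρ j)) ∧ (∀ j, IsDensityMatrix (τ j)) ∧
    σ = ∑ j, (p j : ℂ) • (ρ j ⊗ₖ τ j)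


/-!
For a product state, `Tr(F (ρ ⊗ τ)) = Tr(ρ τ)`, which is nonnegative because `ρ` and `τ` are
positive semidefinite. By linearity `Tr(F σ) ≥ 0` for every separable `σ`, so
`Tr(P σ) = (1 - Tr(F σ)) / 2 ≤ 1 / 2 ≤ √3 / 2`.
-/

open scoped MatrixOrder in
theorem Matrix.PosSemidef.trace_mul_nonneg {n 𝕜 : Type*} [Fintype n] [RCLike 𝕜]
    {A B : Matrix n n 𝕜} (hA : A.PosSemidef) (hB : B.PosSemidef) : 0 ≤ (A * B).trace := by
  classical
  obtain ⟨C, rfl⟩ := CStarAlgebra.nonneg_iff_eq_star_mul_self.mp hA.nonneg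
  rw [star_eq_conjTranspose, Matrix.mul_assoc, trace_mul_comm]
  exact (hB.mul_mul_conjTranspose_same C).trace_nonneg

theorem trace_swapMat_mul_kronecker {d : ℕ} (ρ τ : Matrix (Fin d) (Fin d) ℂ) :
    (swapMat d * (ρ ⊗ₖ τ)).trace = (ρ * τ).trace := by
  simp only [Matrix.trace, Matrix.diag, Matrix.mul_apply, swapMat, kroneckerMap_apply,
    Fintype.sum_prod_type, ite_mul, one_mul, zero_mul, Finset.sum_ite_eq,
    Finset.mem_univ, if_true]
  exact Finset.sum_comm

theorem trace_swapMat_mul_nonneg_of_isSeparableState {d : ℕ}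
    {σ : Matrix (Fin d × Fin d) (Fin d × Fin d) ℂ} (hσ : IsSeparableState σ) :
    0 ≤ (swapMat d * σ).trace := by
  obtain ⟨m, p, ρ, τ, hp, -, hρ, hτ, rfl⟩ := hσ
  rw [Matrix.mul_sum, trace_sum]
  refine Finset.sum_nonneg fun j _ => ?_
  rw [Matrix.mul_smul, trace_smul, trace_swapMat_mul_kronecker, smul_eq_mul]
  exact mul_nonneg (mod_cast hp j) ((hρ j).1.trace_mul_nonneg (hτ j).1)

theorem trace_antiProj_mul {d : ℕ} (σ : Matrix (Fin d × Fin d) (Fin d × Fin d) ℂ) :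
    (antiProj d * σ).trace = (σ.trace - (swapMat d * σ).trace) / 2 := by
  rw [antiProj, Matrix.smul_mul, trace_smul, Matrix.sub_mul, trace_sub, Matrix.one_mul,
    smul_eq_mul]
  ring

theorem antisymmetric_overlap_separable_le_general (d : ℕ)
    (σ : Matrix (Fin d × Fin d) (Fin d × Fin d) ℂ)
    (hσ : IsDensityMatrix σ) (hsep : IsSeparableState σ) :
    ((antiProj d * σ).trace).re ≤ Real.sqrt 3 / 2 := by
  have hswap : 0 ≤ ((swapMat d * σ).trace).re :=
    (Complex.nonneg_iff.mp (trace_swapMat_mul_nonneg_of_isSeparableState hsep)).1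
  have hsqrt3 : 1 ≤ Real.sqrt 3 := Real.one_le_sqrt.mpr (by norm_num)
  rw [trace_antiProj_mul, hσ.2, Complex.div_ofNat_re, Complex.sub_re, Complex.one_re]
  linarith

/-- For every separable density matrix `σ` on `ℂ^d ⊗ ℂ^d` (`d ≥ 2`), the overlap with the
antisymmetric projector satisfies `Re Tr(P·σ) ≤ √3/2 = √(3/4)`. -/
theorem antisymmetric_overlap_separable_le (d : ℕ) (hd : 2 ≤ d)
    (σ : Matrix (Fin d × Fin d) (Fin d × Fin d) ℂ)
    (hσ : IsDensityMatrix σ) (hsep : IsSeparableState σ) :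
    ((antiProj d * σ).trace).re ≤ Real.sqrt 3 / 2 :=
  antisymmetric_overlap_separable_le_general d σ hσ hsep
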